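/- Let a > 0 and b > 0 with a/b irrational. Then the equation g(x) + g(x + a) + g(x + b) = 0 (for all x ∈ ℝ) admits no continuous periodic solution g ≠ 0; that is, every continuous g : ℝ → ℝ satisfying the equation for all x and admitting a period T > 0 is identically zero. -/

import Mathlib

/-!
Lift `g` to a continuous function `F` on the circle `ℝ / Tℤ`. Translation by `c` multiplies the
`n`-th Fourier coefficient by `e_n(c)`, so the equation gives `(1 + e_n(a) + e_n(b)) F̂(n) = 0`.
Three unit vectors summing to zero form an equilateral triangle, so `1 + e_n(a) + e_n(b) = 0`
forces `e_n(a)^3 = e_n(b)^3 = 1`, i.e. `3na, 3nb ∈ Tℤ`; for `n ≠ 0` this makes `a / b`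
rational.
Hence every Fourier coefficient of `F` vanishes, and so does `F`.
-/

open AddCircle Complex MeasureTheory ComplexConjugate

lemma pow_three_eq_one_of_norm_eq_one_of_norm_one_add_eq_one {u : ℂ} (hu : ‖u‖ = 1)
    (h : ‖1 + u‖ = 1) : u ^ 3 = 1 := by
  have e1 : u * conj u = 1 := by rw [mul_conj, normSq_eq_norm_sq, hu]; simp
  have e2 : (1 + u) * conj (1 + u) = 1 := by rw [mul_conj, normSq_eq_norm_sq, h]; simp
  rw [map_add, map_one] at e2
  -- `e2 - e1` reads `u + conj u + 1 = 0`; multiplying by `u` gives `u ^ 2 + u + 1 = 0`.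
  linear_combination (u - 1) * (u * (e2 - e1) - e1)

lemma Irrational.eq_zero_of_zsmul_coe_eq_zero {a b : ℝ} (hirr : Irrational (a / b)) {T : ℝ}
    (hT : T ≠ 0) {m : ℤ} (ha : m • (a : AddCircle T) = 0) (hb : m • (b : AddCircle T) = 0) :
    m = 0 := by
  by_contra hm
  rw [← coe_zsmul, coe_eq_zero_iff] at ha hb
  obtain ⟨k, hk⟩ := ha
  obtain ⟨l, hl⟩ := hb
  have hab : a / b = ((k / l : ℚ) : ℝ) := by
    rw [zsmul_eq_mul, zsmul_eq_mul] at hk hl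
    rw [← mul_div_mul_left a b (Int.cast_ne_zero.mpr hm), ← hk, ← hl,
      mul_div_mul_right _ _ hT]
    push_cast
    rfl
  exact hirr.ne_rat _ hab

namespace AddCircle

variable {T : ℝ}

lemma zsmul_eq_zero_of_fourier_pow_eq_one (hT : T ≠ 0) {n : ℤ} {x : AddCircle T} {k : ℕ}
    (h : fourier n x ^ k = 1) : ((k : ℤ) * n) • x = 0 := by
  apply injective_toCircle hT
  rw [mul_zsmul, natCast_zsmul, toCircle_nsmul, toCircle_zero]
  ext
  simpa [fourier_apply] using h

lemma fourier_neg_eq_fourier_mul_fourier_neg_add (n : ℤ) (x c : AddCircle T) :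
    fourier (-n) x = fourier n c * fourier (-n) (x + c) := by
  rw [fourier_apply, fourier_apply, fourier_apply, ← Circle.coe_mul, ← toCircle_add]
  congr 2
  rw [smul_add, neg_smul, neg_smul]
  abel

variable [Fact (0 < T)]

lemma fourierCoeff_comp_add_right {E : Type*} [NormedAddCommGroup E] [NormedSpace ℂ E]
    (f : AddCircle T → E) (c : AddCircle T) (n : ℤ) :
    fourierCoeff (fun x => f (x + c)) n = fourier n c • fourierCoeff f n := by
  have hshift : (fun x => fourier (-n) x • f (x + c)) =
      fun x => fourier n c • (fourier (-n) (x + c) • f (x + c)) := by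
    ext x
    rw [smul_smul, ← fourier_neg_eq_fourier_mul_fourier_neg_add]
  rw [fourierCoeff, hshift, integral_smul,
    integral_add_right_eq_self (fun y => fourier (-n) y • f y) c]
  rfl

lemma eq_zero_of_fourierCoeff_eq_zero {f : C(AddCircle T, ℂ)} (h : ∀ n, fourierCoeff f n = 0) :
    f = 0 := by
  have hf : fourierCoeff f = 0 := funext h
  refine (hasSum_fourier_series_of_summable (f := f) (hf ▸ summable_zero)).unique ?_
  simp [hf, hasSum_zero]

lemma one_add_fourier_add_fourier_mul_fourierCoeff_eq_zero {F : C(AddCircle T, ℂ)}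
    {α β : AddCircle T} (hF : ∀ x, F x + F (x + α) + F (x + β) = 0) (n : ℤ) :
    (1 + fourier n α + fourier n β) * fourierCoeff F n = 0 := by
  have hint : ∀ c : AddCircle T, Integrable (fun x => F (x + c)) haarAddCircle := fun c =>
    (F.continuous.comp (continuous_add_const c)).integrable_of_hasCompactSupport
      (.of_compactSpace _)
  have hsum : fourierCoeff ((fun x => F (x + 0)) + (fun x => F (x + α)) + fun x => F (x + β)) n
      = 0 := by
    have hzero : ((fun x => F (x + 0)) + (fun x => F (x + α)) + fun x => F (x + β)) = 0 :=
      funext fun x => by simpa using hF x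
    rw [hzero]
    simp [fourierCoeff]
  rw [fourierCoeff.add ((hint 0).add (hint α)) (hint β), Pi.add_apply,
    fourierCoeff.add (hint 0) (hint α), Pi.add_apply, fourierCoeff_comp_add_right,
    fourierCoeff_comp_add_right, fourierCoeff_comp_add_right, fourier_eval_zero] at hsum
  simpa [add_mul] using hsum

theorem eq_zero_of_add_add_eq_zero {F : C(AddCircle T, ℂ)} {α β : AddCircle T}
    (hαβ : ∀ m : ℤ, m • α = 0 → m • β = 0 → m = 0)
    (hF : ∀ x, F x + F (x + α) + F (x + β) = 0) : F = 0 := by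
  refine eq_zero_of_fourierCoeff_eq_zero fun n => ?_
  refine (mul_eq_zero.mp (one_add_fourier_add_fourier_mul_fourierCoeff_eq_zero hF n)).resolve_left
    fun h => ?_
  have hT : T ≠ 0 := (Fact.out : 0 < T).ne'
  have hα : fourier n α ^ 3 = 1 := pow_three_eq_one_of_norm_eq_one_of_norm_one_add_eq_one
    (Circle.norm_coe _) (by rw [eq_neg_of_add_eq_zero_left h, norm_neg]; exact Circle.norm_coe _)
  rw [add_right_comm] at h
  have hβ : fourier n β ^ 3 = 1 := pow_three_eq_one_of_norm_eq_one_of_norm_one_add_eq_one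
    (Circle.norm_coe _) (by rw [eq_neg_of_add_eq_zero_left h, norm_neg]; exact Circle.norm_coe _)
  have hn : n = 0 := by
    have := hαβ _ (zsmul_eq_zero_of_fourier_pow_eq_one hT hα)
      (zsmul_eq_zero_of_fourier_pow_eq_one hT hβ)
    omega
  subst hn
  norm_num [fourier_zero] at h

end AddCircle

theorem stmt_18_general (a b : ℝ) (hirr : Irrational (a / b))
    (g : ℝ → ℝ) (hg : Continuous g) (hper : ∃ T > (0 : ℝ), ∀ x : ℝ, g (x + T) = g x)
    (heq : ∀ x : ℝ, g x + g (x + a) + g (x + b) = 0) :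
    g = 0 := by
  obtain ⟨T, hT, hgT⟩ := hper
  have : Fact (0 < T) := ⟨hT⟩
  have hperC : Function.Periodic (fun x => (g x : ℂ)) T := fun x => by simp [hgT x]
  let F : C(AddCircle T, ℂ) :=
    ⟨hperC.lift, continuous_coinduced_dom.mpr (continuous_ofReal.comp hg)⟩
  have hF : F = 0 := by
    refine eq_zero_of_add_add_eq_zero (α := a) (β := b)
      (fun m => hirr.eq_zero_of_zsmul_coe_eq_zero hT.ne') fun x => ?_
    induction x using QuotientAddGroup.induction_on with
    | H x =>
      rw [← coe_add, ← coe_add]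
      simp only [F, ContinuousMap.coe_mk, hperC.lift_coe]
      exact_mod_cast heq x
  funext x
  simpa [F, hperC.lift_coe] using congr($hF x)

/-- if `a, b > 0` and `a / b` is irrational, the equation
`g x + g (x + a) + g (x + b) = 0` has no nonzero continuous periodic solution. -/
theorem stmt_18 (a b : ℝ) (ha : 0 < a) (hb : 0 < b) (hirr : Irrational (a / b))
    (g : ℝ → ℝ) (hg : Continuous g) (hper : ∃ T > (0 : ℝ), ∀ x : ℝ, g (x + T) = g x)
    (heq : ∀ x : ℝ, g x + g (x + a) + g (x + b) = 0) :
    g = 0 :=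
  stmt_18_general a b hirr g hg hper heq
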